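/- Let f₁ = (a₁,b₁,c₁) and f₂ = (a₂,b₂,c₂) be real quadratic coefficient vectors with negative discriminants Δᵢ = bᵢ² - 4aᵢcᵢ < 0 and a₁, a₂ > 0, with complex roots α₁, α₂ in the upper half plane. Then the hyperbolic distance between the roots satisfies cosh d(α₁, α₂) = (2a₁c₂ + 2a₂c₁ - b₁b₂)/√((4a₁c₁ - b₁²)(4a₂c₂ - b₂²)). -/

import Mathlib

/-! A real quadratic with root `α = x + iy`, `y > 0`, has coefficients `b = -2ax`,
`c = a|α|²`, hence discriminant `b² - 4ac = -(2ay)²`. Substituting, the discriminant-form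
quotient becomes `((x₁ - x₂)² + y₁² + y₂²) / (2y₁y₂)`, which is the classical expression
for `cosh d(α₁, α₂)` in the upper half plane. -/

open UpperHalfPlane

/-- A real quadratic vanishing at a non-real `z` also vanishes at `conj z`, so it is
`a (X - z) (X - conj z)` and its coefficients are read off from `z`. -/
theorem Complex.quadratic_coeffs_of_root {a b c : ℝ} {z : ℂ} (hz : z.im ≠ 0)
    (h : (a : ℂ) * z ^ 2 + (b : ℂ) * z + (c : ℂ) = 0) :
    b = -2 * a * z.re ∧ c = a * Complex.normSq z := by
  have him := congrArg Complex.im h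
  have hre := congrArg Complex.re h
  simp only [Complex.add_im, Complex.add_re, Complex.mul_im, Complex.mul_re, pow_two,
    Complex.ofReal_re, Complex.ofReal_im, Complex.zero_re, Complex.zero_im] at him hre
  have hb : 2 * a * z.re + b = 0 := by
    have : z.im * (2 * a * z.re + b) = 0 := by linear_combination him
    exact (mul_eq_zero.mp this).resolve_left hz
  refine ⟨by linarith, ?_⟩
  rw [Complex.normSq_apply]
  linear_combination hre - z.re * hb

theorem Complex.discrim_eq_sq_im (a : ℝ) (z : ℂ) :
    4 * a * (a * Complex.normSq z) - (-2 * a * z.re) ^ 2 = (2 * a * z.im) ^ 2 := by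
  rw [Complex.normSq_apply]
  ring

theorem cosh_dist_roots_eq_discriminant_form_general (a₁ b₁ c₁ a₂ b₂ c₂ : ℝ)
    (ha₁ : 0 < a₁) (ha₂ : 0 < a₂)
    (α₁ α₂ : UpperHalfPlane)
    (hroot₁ : (a₁ : ℂ) * (α₁ : ℂ) ^ 2 + (b₁ : ℂ) * (α₁ : ℂ) + (c₁ : ℂ) = 0)
    (hroot₂ : (a₂ : ℂ) * (α₂ : ℂ) ^ 2 + (b₂ : ℂ) * (α₂ : ℂ) + (c₂ : ℂ) = 0) :
    Real.cosh (dist α₁ α₂) =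
      (2 * a₁ * c₂ + 2 * a₂ * c₁ - b₁ * b₂) /
        Real.sqrt ((4 * a₁ * c₁ - b₁ ^ 2) * (4 * a₂ * c₂ - b₂ ^ 2)) := by
  obtain ⟨rfl, rfl⟩ := Complex.quadratic_coeffs_of_root α₁.im_pos.ne' hroot₁
  obtain ⟨rfl, rfl⟩ := Complex.quadratic_coeffs_of_root α₂.im_pos.ne' hroot₂
  have hy₁ := α₁.im_pos
  have hy₂ := α₂.im_pos
  rw [Complex.discrim_eq_sq_im, Complex.discrim_eq_sq_im, ← mul_pow,
    Real.sqrt_sq (by positivity), cosh_dist']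
  simp only [Complex.normSq_apply, coe_re, coe_im]
  field_simp
  ring

/-- The roots map is an isometry from the projective model given by the discriminant form
to the upper half plane: if `α₁, α₂` are the upper-half-plane roots of real quadratics
`(a₁,b₁,c₁)`, `(a₂,b₂,c₂)` with `aᵢ > 0` and negative discriminants, then
`cosh d(α₁,α₂) = (2a₁c₂ + 2a₂c₁ - b₁b₂)/√((4a₁c₁-b₁²)(4a₂c₂-b₂²))`. -/
theorem cosh_dist_roots_eq_discriminant_form (a₁ b₁ c₁ a₂ b₂ c₂ : ℝ)
    (ha₁ : 0 < a₁) (ha₂ : 0 < a₂)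
    (hd₁ : b₁ ^ 2 - 4 * a₁ * c₁ < 0) (hd₂ : b₂ ^ 2 - 4 * a₂ * c₂ < 0)
    (α₁ α₂ : UpperHalfPlane)
    (hroot₁ : (a₁ : ℂ) * (α₁ : ℂ) ^ 2 + (b₁ : ℂ) * (α₁ : ℂ) + (c₁ : ℂ) = 0)
    (hroot₂ : (a₂ : ℂ) * (α₂ : ℂ) ^ 2 + (b₂ : ℂ) * (α₂ : ℂ) + (c₂ : ℂ) = 0) :
    Real.cosh (dist α₁ α₂) =
      (2 * a₁ * c₂ + 2 * a₂ * c₁ - b₁ * b₂) /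
        Real.sqrt ((4 * a₁ * c₁ - b₁ ^ 2) * (4 * a₂ * c₂ - b₂ ^ 2)) :=
  cosh_dist_roots_eq_discriminant_form_general a₁ b₁ c₁ a₂ b₂ c₂ ha₁ ha₂ α₁ α₂ hroot₁ hroot₂
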